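/- arXiv:math/9909115 — 11 statements merged into one kernel-verified Lean document; each statement's English description precedes it below -/
import Mathlib

section
/- Let I be a finite set and let A : I → Finset ℕ assign a finite set to each index, and let k be a natural number. Then the following are equivalent: (a) there exists a function F assigning to each i ∈ I a k-element subset F(i) ⊆ A(i) such that F(i) ∩ F(j) = ∅ for all distinct i, j ∈ I; (b) for every subset J ⊆ I one has |⋃_{i∈J} A(i)| ≥ k·|J|. -/
/-- The `k`-fold version of Hall's marriage theorem: a system of pairwise
disjoint `k`-element subsets `F i ⊆ A i` exists iff every subfamily `J`
satisfies `|⋃_{i ∈ J} A i| ≥ k·|J|`. -/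
theorem stmt_0 {I : Type*} [Fintype I] [DecidableEq I] (A : I → Finset ℕ) (k : ℕ) :
    (∃ F : I → Finset ℕ, (∀ i, F i ⊆ A i ∧ (F i).card = k) ∧
      ∀ i j : I, i ≠ j → Disjoint (F i) (F j)) ↔
    ∀ J : Finset I, k * J.card ≤ (J.biUnion A).card := by
  constructor
  · rintro ⟨F, hF, hdisj⟩ J
    calc k * J.card = ∑ i ∈ J, (F i).card := by
          simp [(hF _).2, Finset.sum_const, mul_comm]
      _ = (J.biUnion F).card :=
          (Finset.card_biUnion (fun i _ j _ hij => hdisj i j hij)).symm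
      _ ≤ (J.biUnion A).card := by
          apply Finset.card_le_card
          intro x hx
          simp only [Finset.mem_biUnion] at hx ⊢
          obtain ⟨i, hi, hxi⟩ := hx
          exact ⟨i, hi, (hF i).1 hxi⟩
  · intro hH
    have hall : ∀ s : Finset (I × Fin k), s.card ≤ (s.biUnion fun p => A p.1).card := by
      intro s
      have hsub : s ⊆ (s.image Prod.fst) ×ˢ Finset.univ := by
        intro p hp
        simp only [Finset.mem_product, Finset.mem_image, Finset.mem_univ, and_true]
        exact ⟨p, hp, rfl⟩
      calc s.card ≤ ((s.image Prod.fst) ×ˢ (Finset.univ : Finset (Fin k))).card :=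
            Finset.card_le_card hsub
        _ = k * (s.image Prod.fst).card := by
            rw [Finset.card_product, Finset.card_univ, Fintype.card_fin, mul_comm]
        _ ≤ ((s.image Prod.fst).biUnion A).card := hH _
        _ = (s.biUnion fun p => A p.1).card := by
            rw [Finset.image_biUnion]
    obtain ⟨f, hfinj, hf⟩ :=
      (Finset.all_card_le_biUnion_card_iff_existsInjective'
        (fun p : I × Fin k => A p.1)).mp hall
    refine ⟨fun i => (Finset.univ : Finset (Fin k)).image (fun j => f (i, j)), ?_, ?_⟩
    · intro i
      constructor
      · intro x hx
        simp only [Finset.mem_image] at hx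
        obtain ⟨j, -, rfl⟩ := hx
        exact hf (i, j)
      · rw [Finset.card_image_of_injective _ (fun a b h => ?_), Finset.card_univ,
          Fintype.card_fin]
        exact (Prod.mk.injEq .. ▸ hfinj h).2
    · intro i j hij
      rw [Finset.disjoint_left]
      intro x hx hx'
      simp only [Finset.mem_image] at hx hx'
      obtain ⟨a, -, rfl⟩ := hx
      obtain ⟨b, -, hb⟩ := hx'
      exact hij (congrArg Prod.fst (hfinj hb)).symm
end

section
/- For every Δ ∈ K^H one has 1 ≤ hn(Δ) ≤ hn⁺(Δ) ≤ HN(Δ). -/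
def IsPFun (f : Finset (ℕ × ℕ)) : Prop :=
  ∀ p ∈ f, ∀ q ∈ f, p.1 = q.1 → p = q

def pdom (f : Finset (ℕ × ℕ)) : Finset ℕ := f.image Prod.fst

/-- `Δ ∈ K^H`: a finite nonempty family of finite partial functions with
nonempty domains and values in `H`. -/
def InKH (H : ℕ → Set ℕ) (Δ : Finset (Finset (ℕ × ℕ))) : Prop :=
  Δ.Nonempty ∧ ∀ f ∈ Δ, IsPFun f ∧ f.Nonempty ∧ ∀ p ∈ f, p.2 ∈ H p.1

/-- A `k`-selector for `Δ`. -/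
def IsSelector (Δ : Finset (Finset (ℕ × ℕ))) (k : ℕ)
    (F : Finset (ℕ × ℕ) → Finset ℕ) : Prop :=
  (∀ f ∈ Δ, F f ⊆ pdom f ∧ (F f).card = k) ∧
  ∀ f ∈ Δ, ∀ g ∈ Δ, f ≠ g → Disjoint (F f) (F g)

/-- `hn⁺(Δ) = max {k+1 : there is a k-selector for Δ}`. -/
noncomputable def hnPlus (Δ : Finset (Finset (ℕ × ℕ))) : ℕ :=
  sSup {m | ∃ k F, IsSelector Δ k F ∧ m = k + 1}

def hnProp (Δ : Finset (Finset (ℕ × ℕ))) (k : ℕ) : Prop :=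
  ∀ Δ' ⊆ Δ, ∃ Δ'' ⊆ Δ',
    (∀ f ∈ Δ'', ∀ g ∈ Δ'', f ≠ g → Disjoint (pdom f) (pdom g)) ∧
    k * Δ'.card ≤ (Δ''.biUnion pdom).card

/-- `hn(Δ)`. -/
noncomputable def hn (Δ : Finset (Finset (ℕ × ℕ))) : ℕ :=
  sSup {m | ∃ k, hnProp Δ k ∧ m = k + 1}

/-- `Δ₀ ⪯ Δ₁`. -/
def Prec (Δ₀ Δ₁ : Finset (Finset (ℕ × ℕ))) : Prop :=
  ∀ f ∈ Δ₀, ∃ g ∈ Δ₁, g ⊆ f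

/-- `HN(Δ) = max {hn(Δ') : Δ' ∈ K^H, Δ ⪯ Δ'}`. -/
noncomputable def HN (H : ℕ → Set ℕ) (Δ : Finset (Finset (ℕ × ℕ))) : ℕ :=
  sSup {m | ∃ Δ', InKH H Δ' ∧ Prec Δ Δ' ∧ m = hn Δ'}

lemma hnProp_zero (Δ : Finset (Finset (ℕ × ℕ))) : hnProp Δ 0 := by
  intro Δ' _
  exact ⟨∅, Finset.empty_subset _, by simp, by simp⟩

lemma hnProp_le (Δ : Finset (Finset (ℕ × ℕ))) (f₀ : Finset (ℕ × ℕ)) (k : ℕ)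
    (hk : hnProp Δ k) (hf : ∃ g ∈ Δ, g ⊆ f₀) : k ≤ (pdom f₀).card := by
  obtain ⟨g, hg, hgf⟩ := hf
  obtain ⟨Δ'', hsub, -, hcard⟩ := hk {g} (Finset.singleton_subset_iff.mpr hg)
  have h1 : Δ''.biUnion pdom ⊆ pdom f₀ := by
    intro n hn
    obtain ⟨h, hh, hnh⟩ := Finset.mem_biUnion.mp hn
    have := hsub hh
    rw [Finset.mem_singleton] at this
    subst this
    exact Finset.image_subset_image hgf hnh
  have := hcard.trans (Finset.card_le_card h1)
  simpa using this

lemma hn_bddAbove (Δ : Finset (Finset (ℕ × ℕ))) (hne : Δ.Nonempty) :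
    BddAbove {m | ∃ k, hnProp Δ k ∧ m = k + 1} := by
  obtain ⟨f₀, hf₀⟩ := hne
  refine ⟨(pdom f₀).card + 1, ?_⟩
  rintro m ⟨k, hk, rfl⟩
  have := hnProp_le Δ f₀ k hk ⟨f₀, hf₀, subset_rfl⟩
  omega

lemma one_le_hn (Δ : Finset (Finset (ℕ × ℕ))) (hne : Δ.Nonempty) : 1 ≤ hn Δ :=
  le_csSup (hn_bddAbove Δ hne) ⟨0, hnProp_zero Δ, rfl⟩

lemma hnPlus_bddAbove (Δ : Finset (Finset (ℕ × ℕ))) (hne : Δ.Nonempty) :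
    BddAbove {m | ∃ k F, IsSelector Δ k F ∧ m = k + 1} := by
  obtain ⟨f₀, hf₀⟩ := hne
  refine ⟨(pdom f₀).card + 1, ?_⟩
  rintro m ⟨k, F, ⟨hF1, _⟩, rfl⟩
  obtain ⟨hsub, hcard⟩ := hF1 f₀ hf₀
  have := Finset.card_le_card hsub
  omega

/-- Hall-type step: `hnProp Δ k` yields a `k`-selector. -/
lemma exists_selector (Δ : Finset (Finset (ℕ × ℕ))) (k : ℕ) (hk : hnProp Δ k) :
    ∃ F, IsSelector Δ k F := by
  classical
  set ι := {f // f ∈ Δ} × Fin k with hι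
  set t : ι → Finset ℕ := fun x => pdom x.1.1 with ht
  have hall : ∀ s : Finset ι, s.card ≤ (s.biUnion t).card := by
    intro s
    set T : Finset (Finset (ℕ × ℕ)) := s.image (fun x => (x.1 : Finset (ℕ × ℕ))) with hT
    have hTΔ : T ⊆ Δ := by
      intro g hg
      obtain ⟨x, -, rfl⟩ := Finset.mem_image.mp hg
      exact x.1.2
    have h1 : s.card ≤ k * T.card := by
      apply Finset.card_le_mul_card_image
      intro b _
      calc ({a ∈ s | (a.1 : Finset (ℕ × ℕ)) = b}).card
          ≤ (Finset.univ : Finset (Fin k)).card := by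
            apply Finset.card_le_card_of_injOn (fun x => x.2)
            · intro _ _; exact Finset.mem_univ _
            · intro x hx y hy hxy
              simp only [Finset.coe_filter, Set.mem_setOf_eq] at hx hy
              have h1 : x.1 = y.1 := Subtype.ext (hx.2.trans hy.2.symm)
              exact Prod.ext h1 hxy
        _ = k := by simp
    obtain ⟨Δ'', hsub, -, hcard⟩ := hk T hTΔ
    have h2 : Δ''.biUnion pdom ⊆ s.biUnion t := by
      intro n hn
      obtain ⟨g, hg, hng⟩ := Finset.mem_biUnion.mp hn
      obtain ⟨x, hx, rfl⟩ := Finset.mem_image.mp (hsub hg)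
      exact Finset.mem_biUnion.mpr ⟨x, hx, hng⟩
    exact h1.trans (hcard.trans (Finset.card_le_card h2))
  obtain ⟨e, he_inj, he_mem⟩ :=
    (Finset.all_card_le_biUnion_card_iff_exists_injective t).mp hall
  refine ⟨fun g => if h : g ∈ Δ then
      (Finset.univ : Finset (Fin k)).image (fun i => e (⟨g, h⟩, i)) else ∅, ?_, ?_⟩
  · intro f hf
    simp only [dif_pos hf]
    constructor
    · intro n hn
      obtain ⟨i, -, rfl⟩ := Finset.mem_image.mp hn
      exact he_mem (⟨f, hf⟩, i)
    · rw [Finset.card_image_of_injective _ (fun i j hij => by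
        have := he_inj hij
        exact (Prod.ext_iff.mp this).2)]
      simp
  · intro f hf g hg hfg
    simp only [dif_pos hf, dif_pos hg]
    rw [Finset.disjoint_left]
    intro n hnf hng
    obtain ⟨i, -, hi⟩ := Finset.mem_image.mp hnf
    obtain ⟨j, -, hj⟩ := Finset.mem_image.mp hng
    have := he_inj (hi.trans hj.symm)
    exact hfg (congrArg (fun x : ι => (x.1 : Finset (ℕ × ℕ))) this)

theorem stmt_1 (H : ℕ → Set ℕ) (hH : ∀ n, (H n).Nonempty)
    (Δ : Finset (Finset (ℕ × ℕ))) (hΔ : InKH H Δ) :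
    1 ≤ hn Δ ∧ hn Δ ≤ hnPlus Δ ∧ hnPlus Δ ≤ HN H Δ := by
  classical
  obtain ⟨hne, hmem⟩ := hΔ
  obtain ⟨f₀, hf₀⟩ := hne
  -- Bound for the HN set
  have HN_bdd : BddAbove {m | ∃ Δ', InKH H Δ' ∧ Prec Δ Δ' ∧ m = hn Δ'} := by
    refine ⟨(pdom f₀).card + 1, ?_⟩
    rintro m ⟨Δ', ⟨hne', -⟩, hprec, rfl⟩
    apply csSup_le'
    rintro m' ⟨k', hk', rfl⟩
    have := hnProp_le Δ' f₀ k' hk' (hprec f₀ hf₀)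
    omega
  have hΔ' : InKH H Δ := ⟨⟨f₀, hf₀⟩, hmem⟩
  have hHN_ge_hn : hn Δ ≤ HN H Δ :=
    le_csSup HN_bdd ⟨Δ, hΔ', fun f hf => ⟨f, hf, subset_rfl⟩, rfl⟩
  refine ⟨one_le_hn Δ ⟨f₀, hf₀⟩, ?_, ?_⟩
  · -- hn ≤ hnPlus
    apply csSup_le'
    rintro m ⟨k, hk, rfl⟩
    obtain ⟨F, hF⟩ := exists_selector Δ k hk
    exact le_csSup (hnPlus_bddAbove Δ ⟨f₀, hf₀⟩) ⟨k, F, hF, rfl⟩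
  · -- hnPlus ≤ HN
    apply csSup_le'
    rintro m ⟨k, F, ⟨hF1, hF2⟩, rfl⟩
    rcases Nat.eq_zero_or_pos k with rfl | hkpos
    · exact le_trans (one_le_hn Δ ⟨f₀, hf₀⟩) hHN_ge_hn
    -- construct Δ' by restricting each f to F f
    set r : Finset (ℕ × ℕ) → Finset (ℕ × ℕ) := fun f => f.filter (fun p => p.1 ∈ F f) with hr
    set Δ' : Finset (Finset (ℕ × ℕ)) := Δ.image r with hΔ'def
    have hpdom_r : ∀ f ∈ Δ, pdom (r f) = F f := by
      intro f hf
      ext n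
      simp only [pdom, Finset.mem_image, hr, Finset.mem_filter]
      constructor
      · rintro ⟨p, ⟨-, hp2⟩, rfl⟩; exact hp2
      · intro hn
        have : n ∈ pdom f := (hF1 f hf).1 hn
        obtain ⟨p, hp, rfl⟩ := Finset.mem_image.mp this
        exact ⟨p, ⟨hp, hn⟩, rfl⟩
    have hKH' : InKH H Δ' := by
      constructor
      · exact ⟨r f₀, Finset.mem_image_of_mem r hf₀⟩
      · intro g hg
        obtain ⟨f, hf, rfl⟩ := Finset.mem_image.mp hg
        obtain ⟨hpf, -, hval⟩ := hmem f hf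
        refine ⟨fun p hp q hq => hpf p (Finset.filter_subset _ _ hp) q
          (Finset.filter_subset _ _ hq), ?_, fun p hp => hval p (Finset.filter_subset _ _ hp)⟩
        -- nonempty since F f has card k ≥ 1
        have : (pdom (r f)).Nonempty := by
          rw [hpdom_r f hf]
          exact Finset.card_pos.mp (by rw [(hF1 f hf).2]; exact hkpos)
        obtain ⟨n, hn⟩ := this
        obtain ⟨p, hp, -⟩ := Finset.mem_image.mp hn
        exact ⟨p, hp⟩
    have hprec : Prec Δ Δ' :=
      fun f hf => ⟨r f, Finset.mem_image_of_mem r hf, Finset.filter_subset _ _⟩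
    have hhn' : k + 1 ≤ hn Δ' := by
      apply le_csSup (hn_bddAbove Δ' hKH'.1)
      refine ⟨k, ?_, rfl⟩
      intro Δ₁ hΔ₁
      refine ⟨Δ₁, subset_rfl, ?_, ?_⟩
      · intro g hg g' hg' hgg'
        obtain ⟨f, hf, rfl⟩ := Finset.mem_image.mp (hΔ₁ hg)
        obtain ⟨f', hf', rfl⟩ := Finset.mem_image.mp (hΔ₁ hg')
        rw [hpdom_r f hf, hpdom_r f' hf']
        exact hF2 f hf f' hf' (fun h => hgg' (by rw [h]))
      · have hdisj : ∀ g ∈ Δ₁, ∀ g' ∈ Δ₁, g ≠ g' → Disjoint (pdom g) (pdom g') := by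
          intro g hg g' hg' hgg'
          obtain ⟨f, hf, rfl⟩ := Finset.mem_image.mp (hΔ₁ hg)
          obtain ⟨f', hf', rfl⟩ := Finset.mem_image.mp (hΔ₁ hg')
          rw [hpdom_r f hf, hpdom_r f' hf']
          exact hF2 f hf f' hf' (fun h => hgg' (by rw [h]))
        rw [Finset.card_biUnion hdisj]
        have : ∀ g ∈ Δ₁, (pdom g).card = k := by
          intro g hg
          obtain ⟨f, hf, rfl⟩ := Finset.mem_image.mp (hΔ₁ hg)
          rw [hpdom_r f hf]
          exact (hF1 f hf).2
        rw [Finset.sum_congr rfl this, Finset.sum_const, smul_eq_mul, mul_comm]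
    exact hhn'.trans (le_csSup HN_bdd ⟨Δ', hKH', hprec, rfl⟩)
end

section
/- If Δ₀, Δ₁ ∈ K^H, then hn⁺(Δ₀ ∪ Δ₁) ≥ ⌊min(hn⁺(Δ₀), hn⁺(Δ₁)) / 2⌋. -/
/-! A `k`-selector for `Δ₀` restricts to one for any subfamily, so by the easy half of the
`k`-fold Hall theorem every subfamily `A` of `Δ₀` (and likewise of `Δ₁`) has `k |A|` points in
the union of its domains, for `k = min(hn⁺(Δ₀), hn⁺(Δ₁)) - 1`. A subfamily of `Δ₀ ∪ Δ₁` has at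
least half of its members in `Δ₀` or in `Δ₁`, so it has at least `⌊k / 2⌋ |A|` points, and the
hard half of the `k`-fold Hall theorem (Hall's marriage theorem applied to `⌊k / 2⌋` copies of
each member) yields a `⌊k / 2⌋`-selector for `Δ₀ ∪ Δ₁`. -/

open Finset

section KFoldHall

variable {α β : Type*} [DecidableEq β] (d : α → Finset β)

def KHallCondition (s : Finset α) (k : ℕ) : Prop :=
  ∀ t ⊆ s, k * #t ≤ #(t.biUnion d)

variable {d}

theorem KHallCondition.mono {s : Finset α} {k l : ℕ} (h : KHallCondition d s k) (hlk : l ≤ k) :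
    KHallCondition d s l :=
  fun t ht => (Nat.mul_le_mul_right _ hlk).trans (h t ht)

theorem KHallCondition.union_half [DecidableEq α] {s₀ s₁ : Finset α} {k : ℕ}
    (h₀ : KHallCondition d s₀ k) (h₁ : KHallCondition d s₁ k) :
    KHallCondition d (s₀ ∪ s₁) (k / 2) := by
  intro t ht
  have hsplit : #(t ∩ s₀) + #(t \ s₀) = #t := card_inter_add_card_sdiff t s₀
  have hrest : t \ s₀ ⊆ s₁ := fun a ha => by
    rw [mem_sdiff] at ha
    exact (mem_union.mp (ht ha.1)).resolve_left ha.2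
  -- the larger of the two parts contains at least half of `t`
  suffices ∀ u ⊆ t, KHallCondition d u k → #t ≤ 2 * #u → k / 2 * #t ≤ #(t.biUnion d) by
    rcases le_total #(t ∩ s₀) #(t \ s₀) with hle | hle
    · exact this _ sdiff_subset (fun v hv => h₁ v (hv.trans hrest)) (by omega)
    · exact this _ inter_subset_left (fun v hv => h₀ v (hv.trans inter_subset_right)) (by omega)
  intro u hut hu htu
  calc k / 2 * #t ≤ k / 2 * 2 * #u := by rw [mul_assoc]; exact Nat.mul_le_mul_left _ htu
    _ ≤ k * #u := Nat.mul_le_mul_right _ (Nat.div_mul_le_self k 2)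
    _ ≤ #(u.biUnion d) := hu u Subset.rfl
    _ ≤ #(t.biUnion d) := card_le_card (biUnion_subset_biUnion_of_subset_left _ hut)

theorem KHallCondition.card_le_card_biUnion_copies [DecidableEq α] {s : Finset α} {k : ℕ}
    (h : KHallCondition d s k) (t : Finset (s × Fin k)) :
    #t ≤ #(t.biUnion fun x => d x.1) := by
  have hfibres : #t ≤ k * #(t.image fun x => (x.1 : α)) := by
    refine card_le_mul_card_image t k fun a _ => ?_
    calc #{x ∈ t | (x.1 : α) = a} ≤ #(univ : Finset (Fin k)) :=
          card_le_card_of_injOn Prod.snd (fun _ _ => mem_coe.mpr (mem_univ _))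
            fun x hx y hy hxy => Prod.ext (Subtype.ext (by
              rw [mem_coe, mem_filter] at hx hy
              rw [hx.2, hy.2])) hxy
      _ = k := by rw [card_univ, Fintype.card_fin]
  have himage : (t.image fun x => (x.1 : α)) ⊆ s := fun a ha => by
    obtain ⟨x, -, rfl⟩ := mem_image.mp ha
    exact x.1.2
  calc #t ≤ k * #(t.image fun x => (x.1 : α)) := hfibres
    _ ≤ #((t.image fun x => (x.1 : α)).biUnion d) := h _ himage
    _ = #(t.biUnion fun x => d x.1) := by rw [image_biUnion]

theorem KHallCondition.exists_selection {s : Finset α} {k : ℕ} (h : KHallCondition d s k) :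
    ∃ F : α → Finset β, (∀ a ∈ s, F a ⊆ d a ∧ #(F a) = k) ∧
      ∀ a ∈ s, ∀ b ∈ s, a ≠ b → Disjoint (F a) (F b) := by
  classical
  -- Hall's marriage theorem for `k` copies of each member of `s`
  obtain ⟨f, hf_inj, hf_mem⟩ :=
    (all_card_le_biUnion_card_iff_exists_injective fun x : s × Fin k => d x.1).mp
      h.card_le_card_biUnion_copies
  refine ⟨fun a => if ha : a ∈ s then univ.image fun i => f (⟨a, ha⟩, i) else ∅, ?_, ?_⟩
  · intro a ha
    simp only [dif_pos ha]
    refine ⟨fun b hb => ?_, ?_⟩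
    · obtain ⟨i, -, rfl⟩ := mem_image.mp hb
      exact hf_mem _
    · rw [card_image_of_injective _ fun i j hij => congrArg Prod.snd (hf_inj hij), card_univ,
        Fintype.card_fin]
  · intro a ha b hb hab
    simp only [dif_pos ha, dif_pos hb, disjoint_left, mem_image]
    rintro _ ⟨i, -, rfl⟩ ⟨j, -, hji⟩
    exact hab (congrArg (fun x : s × Fin k => (x.1 : α)) (hf_inj hji)).symm

end KFoldHall

section Selectors

variable {Δ : Finset (Finset (ℕ × ℕ))} {k : ℕ} {F : Finset (ℕ × ℕ) → Finset ℕ}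

theorem IsSelector.kHallCondition (hF : IsSelector Δ k F) : KHallCondition pdom Δ k := by
  intro t ht
  calc k * #t = ∑ f ∈ t, #(F f) := by
        rw [sum_congr rfl fun f hf => (hF.1 f (ht hf)).2, sum_const, smul_eq_mul, mul_comm]
    _ = #(t.biUnion F) := (card_biUnion fun f hf g hg hfg => hF.2 f (ht hf) g (ht hg) hfg).symm
    _ ≤ #(t.biUnion pdom) := card_le_card (biUnion_mono fun f hf => (hF.1 f (ht hf)).1)

theorem bddAbove_selector_sizes (hΔ : Δ.Nonempty) :
    BddAbove {m | ∃ k F, IsSelector Δ k F ∧ m = k + 1} := by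
  obtain ⟨f, hf⟩ := hΔ
  refine ⟨#(pdom f) + 1, ?_⟩
  rintro _ ⟨k, F, hF, rfl⟩
  have hk : k ≤ #(pdom f) := (hF.1 f hf).2 ▸ card_le_card (hF.1 f hf).1
  omega

theorem exists_isSelector_hnPlus_eq (hΔ : Δ.Nonempty) :
    ∃ k F, IsSelector Δ k F ∧ hnPlus Δ = k + 1 := by
  have hzero : IsSelector Δ 0 fun _ => ∅ :=
    ⟨fun _ _ => ⟨empty_subset _, card_empty⟩, fun _ _ _ _ _ => disjoint_empty_left _⟩
  have hnonempty : {m | ∃ k F, IsSelector Δ k F ∧ m = k + 1}.Nonempty := ⟨1, 0, _, hzero, rfl⟩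
  exact Nat.sSup_mem hnonempty (bddAbove_selector_sizes hΔ)

theorem IsSelector.succ_le_hnPlus (hF : IsSelector Δ k F) (hΔ : Δ.Nonempty) :
    k + 1 ≤ hnPlus Δ :=
  le_csSup (bddAbove_selector_sizes hΔ) ⟨k, F, hF, rfl⟩

end Selectors

theorem stmt_2 (H : ℕ → Set ℕ) (Δ₀ Δ₁ : Finset (Finset (ℕ × ℕ)))
    (h₀ : InKH H Δ₀) (h₁ : InKH H Δ₁) :
    min (hnPlus Δ₀) (hnPlus Δ₁) / 2 ≤ hnPlus (Δ₀ ∪ Δ₁) := by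
  obtain ⟨k₀, F₀, hF₀, e₀⟩ := exists_isSelector_hnPlus_eq h₀.1
  obtain ⟨k₁, F₁, hF₁, e₁⟩ := exists_isSelector_hnPlus_eq h₁.1
  have hHall : KHallCondition pdom (Δ₀ ∪ Δ₁) (min k₀ k₁ / 2) :=
    (hF₀.kHallCondition.mono (min_le_left _ _)).union_half
      (hF₁.kHallCondition.mono (min_le_right _ _))
  obtain ⟨F, hF⟩ := hHall.exists_selection
  have hle := IsSelector.succ_le_hnPlus hF (h₀.1.mono subset_union_left)
  rw [e₀, e₁]
  omega
end

section
/- Suppose m⁰₀ < m⁰₁ ≤ m¹₀ < m¹₁ ≤ … ≤ mᵏ₀ < mᵏ₁ are natural numbers and Δᵢ ∈ K^H with all domains of members of Δᵢ contained in the interval [mⁱ₀, mⁱ₁), for i ≤ k. Then hn⁺(⋃_{i≤k} Δᵢ) = min{hn⁺(Δᵢ) : i ≤ k} and hn(⋃_{i≤k} Δᵢ) = min{hn(Δᵢ) : i ≤ k}. -/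
/-!
Both invariants only record which `k` admit a witness: `k + 1 ≤ hn⁺(Δ)` iff `Δ` has a
`k`-selector, and `k + 1 ≤ hn(Δ)` iff `hnProp Δ k`. Each of these properties passes to
subfamilies, and, when members of different families have disjoint domains, witnesses for the
families glue to a witness for their union (a subfamily `Δ'` of the union splits into its parts,
whose cardinalities add up, as do the sizes of the disjoint unions of domains). Hence a `k` is
admissible for the union iff it is admissible for every `Δᵢ`, which is the claimed minimum.
-/

open Finset

def DomainsDisjoint (Δ₁ Δ₂ : Finset (Finset (ℕ × ℕ))) : Prop :=
  ∀ f ∈ Δ₁, ∀ g ∈ Δ₂, Disjoint (pdom f) (pdom g)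

section Witnesses

variable {Δ Δ₁ Δ₂ : Finset (Finset (ℕ × ℕ))} {j k : ℕ}

lemma IsSelector.mono {F : Finset (ℕ × ℕ) → Finset ℕ} (h : IsSelector Δ k F) (hs : Δ₁ ⊆ Δ) :
    IsSelector Δ₁ k F :=
  ⟨fun f hf => h.1 f (hs hf), fun f hf g hg => h.2 f (hs hf) g (hs hg)⟩

lemma IsSelector.exists_of_le {F : Finset (ℕ × ℕ) → Finset ℕ} (h : IsSelector Δ k F)
    (hj : j ≤ k) : ∃ G, IsSelector Δ j G := by
  have hshrink : ∀ f ∈ Δ, ∃ t ⊆ F f, t.card = j := fun f hf =>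
    exists_subset_card_eq ((h.1 f hf).2 ▸ hj)
  choose! G hGF hGcard using hshrink
  exact ⟨G, fun f hf => ⟨(hGF f hf).trans (h.1 f hf).1, hGcard f hf⟩,
    fun f hf g hg hfg => (h.2 f hf g hg hfg).mono (hGF f hf) (hGF g hg)⟩

lemma exists_isSelector_empty (k : ℕ) : ∃ F, IsSelector ∅ k F :=
  ⟨fun _ => ∅, by simp [IsSelector]⟩

lemma exists_isSelector_union_iff (hdisj : DomainsDisjoint Δ₁ Δ₂) :
    (∃ F, IsSelector (Δ₁ ∪ Δ₂) k F) ↔ (∃ F, IsSelector Δ₁ k F) ∧ ∃ F, IsSelector Δ₂ k F := by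
  refine ⟨fun ⟨F, hF⟩ => ⟨⟨F, hF.mono subset_union_left⟩, ⟨F, hF.mono subset_union_right⟩⟩, ?_⟩
  rintro ⟨⟨F₁, hF₁⟩, ⟨F₂, hF₂⟩⟩
  have mem₂ : ∀ f ∈ Δ₁ ∪ Δ₂, f ∉ Δ₁ → f ∈ Δ₂ := fun f hf hf₁ =>
    (mem_union.1 hf).resolve_left hf₁
  refine ⟨fun f => if f ∈ Δ₁ then F₁ f else F₂ f, fun f hf => ?_, fun f hf g hg hfg => ?_⟩
  · by_cases hf₁ : f ∈ Δ₁
    · simpa [hf₁] using hF₁.1 f hf₁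
    · simpa [hf₁] using hF₂.1 f (mem₂ f hf hf₁)
  · by_cases hf₁ : f ∈ Δ₁ <;> by_cases hg₁ : g ∈ Δ₁ <;> simp only [hf₁, hg₁, if_true, if_false]
    · exact hF₁.2 f hf₁ g hg₁ hfg
    · exact (hdisj f hf₁ g (mem₂ g hg hg₁)).mono (hF₁.1 f hf₁).1 (hF₂.1 g (mem₂ g hg hg₁)).1
    · exact (hdisj g hg₁ f (mem₂ f hf hf₁)).symm.mono
        (hF₂.1 f (mem₂ f hf hf₁)).1 (hF₁.1 g hg₁).1
    · exact hF₂.2 f (mem₂ f hf hf₁) g (mem₂ g hg hg₁) hfg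

lemma hnProp.mono (h : hnProp Δ k) (hs : Δ₁ ⊆ Δ) : hnProp Δ₁ k :=
  fun Δ' hΔ' => h Δ' (hΔ'.trans hs)

lemma hnProp.of_le (h : hnProp Δ k) (hj : j ≤ k) : hnProp Δ j := by
  intro Δ' hΔ'
  obtain ⟨Δ'', hΔ'', hdisj, hcard⟩ := h Δ' hΔ'
  exact ⟨Δ'', hΔ'', hdisj, (Nat.mul_le_mul_right _ hj).trans hcard⟩

lemma hnProp_empty (k : ℕ) : hnProp ∅ k := by
  intro Δ' hΔ'
  exact ⟨∅, empty_subset _, by simp, by simp [subset_empty.1 hΔ']⟩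

lemma hnProp_union_iff (hdisj : DomainsDisjoint Δ₁ Δ₂) :
    hnProp (Δ₁ ∪ Δ₂) k ↔ hnProp Δ₁ k ∧ hnProp Δ₂ k := by
  refine ⟨fun h => ⟨h.mono subset_union_left, h.mono subset_union_right⟩, ?_⟩
  rintro ⟨h₁, h₂⟩ Δ' hΔ'
  have hsdiff : Δ' \ Δ₁ ⊆ Δ₂ := fun f hf =>
    (mem_union.1 (hΔ' (mem_sdiff.1 hf).1)).resolve_left (mem_sdiff.1 hf).2
  obtain ⟨T₁, hT₁, hT₁disj, hT₁card⟩ := h₁ (Δ' ∩ Δ₁) inter_subset_right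
  obtain ⟨T₂, hT₂, hT₂disj, hT₂card⟩ := h₂ (Δ' \ Δ₁) hsdiff
  have hT₁Δ : T₁ ⊆ Δ₁ := hT₁.trans inter_subset_right
  have hT₂Δ : T₂ ⊆ Δ₂ := hT₂.trans hsdiff
  have hcross : DomainsDisjoint T₁ T₂ := fun f hf g hg => hdisj f (hT₁Δ hf) g (hT₂Δ hg)
  refine ⟨T₁ ∪ T₂, union_subset (hT₁.trans inter_subset_left) (hT₂.trans sdiff_subset),
    fun f hf g hg hfg => ?_, ?_⟩
  · rcases mem_union.1 hf with hf | hf <;> rcases mem_union.1 hg with hg | hg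
    · exact hT₁disj f hf g hg hfg
    · exact hcross f hf g hg
    · exact (hcross g hg f hf).symm
    · exact hT₂disj f hf g hg hfg
  · have hdom : Disjoint (T₁.biUnion pdom) (T₂.biUnion pdom) :=
      (disjoint_biUnion_left _ _ _).2 fun f hf =>
        (disjoint_biUnion_right _ _ _).2 fun g hg => hcross f hf g hg
    calc k * Δ'.card = k * (Δ' ∩ Δ₁).card + k * (Δ' \ Δ₁).card := by
          rw [← mul_add, card_inter_add_card_sdiff]
      _ ≤ (T₁.biUnion pdom).card + (T₂.biUnion pdom).card := add_le_add hT₁card hT₂card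
      _ = ((T₁ ∪ T₂).biUnion pdom).card := by rw [union_biUnion, card_union_of_disjoint hdom]

end Witnesses

lemma biUnion_iff_of_union_iff {P : Finset (Finset (ℕ × ℕ)) → Prop} (hempty : P ∅)
    (hunion : ∀ Δ₁ Δ₂, DomainsDisjoint Δ₁ Δ₂ → (P (Δ₁ ∪ Δ₂) ↔ P Δ₁ ∧ P Δ₂))
    {ι : Type*} [DecidableEq ι] {s : Finset ι} {Δ : ι → Finset (Finset (ℕ × ℕ))}
    (hs : (s : Set ι).Pairwise fun i j => DomainsDisjoint (Δ i) (Δ j)) :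
    P (s.biUnion Δ) ↔ ∀ i ∈ s, P (Δ i) := by
  induction s using Finset.induction_on with
  | empty => simp [hempty]
  | insert a s ha ih =>
    have hcross : DomainsDisjoint (Δ a) (s.biUnion Δ) := by
      intro f hf g hg
      obtain ⟨j, hj, hgj⟩ := mem_biUnion.1 hg
      exact hs (mem_insert_self a s) (mem_insert_of_mem hj) (ne_of_mem_of_not_mem hj ha).symm
        f hf g hgj
    rw [biUnion_insert, hunion _ _ hcross, ih (hs.mono (coe_subset.2 (subset_insert a s))),
      forall_mem_insert]

lemma succ_le_sSup_iff {P : ℕ → Prop} (hP : ∀ {j k}, j ≤ k → P k → P j)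
    (hbdd : ∃ N, ∀ k, P k → k ≤ N) {k : ℕ} :
    k + 1 ≤ sSup {m | ∃ k, P k ∧ m = k + 1} ↔ P k := by
  obtain ⟨N, hN⟩ := hbdd
  have hS : BddAbove {m | ∃ k, P k ∧ m = k + 1} := by
    refine ⟨N + 1, ?_⟩
    rintro _ ⟨k, hk, rfl⟩
    exact Nat.succ_le_succ (hN k hk)
  refine ⟨fun h => ?_, fun hk => le_csSup hS ⟨k, hk, rfl⟩⟩
  have hne : {m | ∃ k, P k ∧ m = k + 1}.Nonempty := by
    by_contra hempty
    rw [Set.not_nonempty_iff_eq_empty.1 hempty, csSup_empty] at h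
    exact Nat.not_succ_le_zero k h
  obtain ⟨k', hk', hsup⟩ := Nat.sSup_mem hne hS
  exact hP (by omega) hk'

lemma succ_le_hnPlus_iff {Δ : Finset (Finset (ℕ × ℕ))} (hΔ : Δ.Nonempty) {k : ℕ} :
    k + 1 ≤ hnPlus Δ ↔ ∃ F, IsSelector Δ k F := by
  obtain ⟨f, hf⟩ := hΔ
  simp only [hnPlus, exists_and_right]
  refine succ_le_sSup_iff (fun hj ⟨F, hF⟩ => hF.exists_of_le hj)
    ⟨(pdom f).card, fun k ⟨F, hF⟩ => ?_⟩
  exact (hF.1 f hf).2 ▸ card_le_card (hF.1 f hf).1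

lemma succ_le_hn_iff {Δ : Finset (Finset (ℕ × ℕ))} (hΔ : Δ.Nonempty) {k : ℕ} :
    k + 1 ≤ hn Δ ↔ hnProp Δ k := by
  refine succ_le_sSup_iff (fun hj hk => hk.of_le hj) ⟨(Δ.biUnion pdom).card, fun k hk => ?_⟩
  obtain ⟨Δ'', hΔ'', -, hcard⟩ := hk Δ subset_rfl
  calc k ≤ k * Δ.card := Nat.le_mul_of_pos_right k hΔ.card_pos
    _ ≤ (Δ''.biUnion pdom).card := hcard
    _ ≤ (Δ.biUnion pdom).card := card_le_card (biUnion_subset_biUnion_of_subset_left _ hΔ'')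

lemma eq_sInf_of_forall_succ_le_iff {a : ℕ} {b : ℕ → ℕ} {K : ℕ}
    (h : ∀ n, n + 1 ≤ a ↔ ∀ i ≤ K, n + 1 ≤ b i) : a = sInf {n | ∃ i ≤ K, n = b i} := by
  have hne : {n | ∃ i ≤ K, n = b i}.Nonempty := ⟨b 0, 0, K.zero_le, rfl⟩
  refine eq_of_forall_le_iff fun c => ?_
  rw [le_csInf_iff' hne]
  rcases c with _ | n
  · exact iff_of_true a.zero_le fun _ _ => Nat.zero_le _
  · simp only [h, mem_lowerBounds, Set.mem_ofPred_eq, forall_exists_index, and_imp]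
    exact ⟨fun h' _ i hi hn => hn ▸ h' i hi, fun h' i hi => h' _ i hi rfl⟩

lemma le_of_interval_chain {K : ℕ} {m₀ m₁ : ℕ → ℕ} (hm : ∀ i ≤ K, m₀ i < m₁ i)
    (hm' : ∀ i < K, m₁ i ≤ m₀ (i + 1)) {i j : ℕ} (hij : i < j) (hj : j ≤ K) : m₁ i ≤ m₀ j := by
  induction j, hij using Nat.le_induction with
  | base => exact hm' i (by omega)
  | succ j hij ih =>
    have := hm j (by omega)
    have := hm' j (by omega)
    have := ih (by omega)
    omega

theorem stmt_3 (H : ℕ → Set ℕ) (k : ℕ) (m₀ m₁ : ℕ → ℕ)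
    (Δ : ℕ → Finset (Finset (ℕ × ℕ)))
    (hm : ∀ i ≤ k, m₀ i < m₁ i) (hm' : ∀ i < k, m₁ i ≤ m₀ (i + 1))
    (hΔ : ∀ i ≤ k, InKH H (Δ i))
    (hdom : ∀ i ≤ k, ∀ f ∈ Δ i, pdom f ⊆ Finset.Ico (m₀ i) (m₁ i)) :
    hnPlus ((Finset.range (k + 1)).biUnion Δ) = sInf {n | ∃ i ≤ k, n = hnPlus (Δ i)} ∧
    hn ((Finset.range (k + 1)).biUnion Δ) = sInf {n | ∃ i ≤ k, n = hn (Δ i)} := by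
  have hsep : ((range (k + 1) : Finset ℕ) : Set ℕ).Pairwise
      fun i j => DomainsDisjoint (Δ i) (Δ j) := by
    intro i hi j hj hij f hf g hg
    simp only [coe_range, Set.mem_Iio, Nat.lt_succ_iff] at hi hj
    refine (disjoint_left.2 fun x hxi hxj => ?_).mono (hdom i hi f hf) (hdom j hj g hg)
    rw [mem_Ico] at hxi hxj
    rcases hij.lt_or_gt with hlt | hlt
    · have := le_of_interval_chain hm hm' hlt hj; omega
    · have := le_of_interval_chain hm hm' hlt hi; omega
  have hne : ((range (k + 1)).biUnion Δ).Nonempty :=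
    (hΔ 0 k.zero_le).1.mono (subset_biUnion_of_mem Δ (mem_range.2 k.succ_pos))
  constructor
  · refine eq_sInf_of_forall_succ_le_iff fun n => ?_
    rw [succ_le_hnPlus_iff hne, biUnion_iff_of_union_iff (P := fun Δ => ∃ F, IsSelector Δ n F)
      (exists_isSelector_empty n) (fun _ _ => exists_isSelector_union_iff) hsep]
    simp only [mem_range, Nat.lt_succ_iff]
    exact forall₂_congr fun i hi => (succ_le_hnPlus_iff (hΔ i hi).1).symm
  · refine eq_sInf_of_forall_succ_le_iff fun n => ?_
    rw [succ_le_hn_iff hne, biUnion_iff_of_union_iff (P := (hnProp · n)) (hnProp_empty n)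
      (fun _ _ => hnProp_union_iff) hsep]
    simp only [mem_range, Nat.lt_succ_iff]
    exact forall₂_congr fun i hi => (succ_le_hn_iff (hΔ i hi).1).symm
end

section
/- Suppose m₀ < m < m₁ and Δ ∈ K^H with all domains contained in [m₀, m₁). Define Δ₀ = {f↾[m₀,m) : f ∈ Δ and 2·|dom(f) ∩ [m₀,m)| ≥ |dom(f)|} and Δ₁ = {f↾[m,m₁) : f ∈ Δ and 2·|dom(f) ∩ [m,m₁)| ≥ |dom(f)|}. Then for each i < 2, either Δᵢ = ∅ or 2·hn(Δᵢ) ≥ hn(Δ). -/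
/-- The restriction `f ↾ [a, b)` of a finite partial function. -/
def restrictPF (f : Finset (ℕ × ℕ)) (a b : ℕ) : Finset (ℕ × ℕ) :=
  f.filter (fun p => a ≤ p.1 ∧ p.1 < b)

/-- `{f ↾ [a,b) : f ∈ Δ and 2·|dom f ∩ [a,b)| ≥ |dom f|}`. -/
def halfPart (Δ : Finset (Finset (ℕ × ℕ))) (a b : ℕ) : Finset (Finset (ℕ × ℕ)) :=
  (Δ.filter (fun f => (pdom f).card ≤ 2 * (pdom f ∩ Finset.Ico a b).card)).image
    (fun f => restrictPF f a b)

lemma pdom_restrict (f : Finset (ℕ × ℕ)) (a b : ℕ) :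
    pdom (restrictPF f a b) = pdom f ∩ Finset.Ico a b := by
  ext n
  simp only [pdom, restrictPF, Finset.mem_image, Finset.mem_filter, Finset.mem_inter,
    Finset.mem_Ico]
  constructor
  · rintro ⟨p, ⟨hp, h1, h2⟩, rfl⟩
    exact ⟨⟨p, hp, rfl⟩, h1, h2⟩
  · rintro ⟨⟨p, hp, rfl⟩, h1, h2⟩
    exact ⟨p, ⟨hp, h1, h2⟩, rfl⟩

lemma bddS (Δ : Finset (Finset (ℕ × ℕ))) (hΔne : Δ.Nonempty) :
    BddAbove {m | ∃ k, hnProp Δ k ∧ m = k + 1} := by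
  obtain ⟨g, hg⟩ := hΔne
  refine ⟨(pdom g).card + 1, ?_⟩
  rintro m ⟨k, hk, rfl⟩
  obtain ⟨Δ'', hsub, _, hb⟩ := hk {g} (Finset.singleton_subset_iff.mpr hg)
  have h1 : Δ''.biUnion pdom ⊆ pdom g := by
    intro x hx
    rw [Finset.mem_biUnion] at hx
    obtain ⟨f, hf, hxf⟩ := hx
    have : f = g := Finset.mem_singleton.mp (hsub hf)
    rwa [this] at hxf
  have := Finset.card_le_card h1
  simp only [Finset.card_singleton, mul_one] at hb
  omega

lemma hnProp_half (Δ : Finset (Finset (ℕ × ℕ))) (a b k : ℕ)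
    (hne : ∀ f ∈ Δ, f.Nonempty) (h : hnProp Δ k) :
    hnProp (halfPart Δ a b) (k / 2) := by
  intro Δ' hΔ'
  classical
  set r := fun f => restrictPF f a b with hr
  set E := (Δ.filter (fun f => (pdom f).card ≤ 2 * (pdom f ∩ Finset.Ico a b).card)).filter
    (fun f => r f ∈ Δ') with hE
  have hEΔ : E ⊆ Δ := (Finset.filter_subset _ _).trans (Finset.filter_subset _ _)
  have hcond : ∀ f ∈ E, (pdom f).card ≤ 2 * (pdom (r f)).card := by
    intro f hf
    rw [hr]; dsimp only; rw [pdom_restrict]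
    exact (Finset.mem_filter.mp ((Finset.mem_filter.mp hf).1)).2
  have hmemΔ' : ∀ f ∈ E, r f ∈ Δ' := fun f hf => (Finset.mem_filter.mp hf).2
  have hsurj : Δ' ⊆ E.image r := by
    intro g hg
    have hg' := hΔ' hg
    rw [halfPart, Finset.mem_image] at hg'
    obtain ⟨f, hf, hfg⟩ := hg'
    refine Finset.mem_image.mpr ⟨f, Finset.mem_filter.mpr ⟨hf, ?_⟩, hfg⟩
    rw [hr]; dsimp only; rw [hfg]; exact hg
  have hcard : Δ'.card ≤ E.card :=
    (Finset.card_le_card hsurj).trans (Finset.card_image_le)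
  obtain ⟨E'', hE''E, hdisj, hbound⟩ := h E hEΔ
  -- nonemptiness of restrictions of members of E
  have hrne : ∀ f ∈ E, (pdom (r f)).Nonempty := by
    intro f hf
    rw [Finset.nonempty_iff_ne_empty]
    intro hemp
    have h1 := hcond f hf
    rw [hemp] at h1
    simp only [Finset.card_empty, mul_zero, Nat.le_zero, Finset.card_eq_zero] at h1
    obtain ⟨p, hp⟩ := hne f (hEΔ hf)
    have : p.1 ∈ pdom f := Finset.mem_image.mpr ⟨p, hp, rfl⟩
    rw [h1] at this
    exact absurd this (Finset.notMem_empty _)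
  have hpsub : ∀ f, pdom (r f) ⊆ pdom f := by
    intro f
    rw [hr]; dsimp only; rw [pdom_restrict]
    exact Finset.inter_subset_left
  have hinj : ∀ f ∈ E'', ∀ f' ∈ E'', r f = r f' → f = f' := by
    intro f hf f' hf' hrr
    by_contra hneq
    have hd := hdisj f hf f' hf' hneq
    have h1 : pdom (r f) ⊆ pdom f := hpsub f
    have h2 : pdom (r f) ⊆ pdom f' := hrr ▸ hpsub f'
    obtain ⟨x, hx⟩ := hrne f (hE''E hf)
    exact (Finset.disjoint_left.mp hd (h1 hx)) (h2 hx)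
  refine ⟨E''.image r, ?_, ?_, ?_⟩
  · intro g hg
    obtain ⟨f, hf, rfl⟩ := Finset.mem_image.mp hg
    exact hmemΔ' f (hE''E hf)
  · intro g hg g' hg' hgg'
    obtain ⟨f, hf, rfl⟩ := Finset.mem_image.mp hg
    obtain ⟨f', hf', rfl⟩ := Finset.mem_image.mp hg'
    have hneq : f ≠ f' := fun hh => hgg' (by rw [hh])
    exact (hdisj f hf f' hf' hneq).mono (hpsub f) (hpsub f')
  · -- cardinality bound
    have hb1 : (E''.biUnion pdom).card ≤ ∑ f ∈ E'', (pdom f).card :=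
      Finset.card_biUnion_le
    have hb2 : ∑ f ∈ E'', (pdom f).card ≤ 2 * ∑ f ∈ E'', (pdom (r f)).card := by
      rw [Finset.mul_sum]
      exact Finset.sum_le_sum (fun f hf => hcond f (hE''E hf))
    have hb3 : ∑ g ∈ E''.image r, (pdom g).card = ∑ f ∈ E'', (pdom (r f)).card :=
      Finset.sum_image hinj
    have hdisj' : ∀ g ∈ E''.image r, ∀ g' ∈ E''.image r, g ≠ g' →
        Disjoint (pdom g) (pdom g') := by
      intro g hg g' hg' hgg'
      obtain ⟨f, hf, rfl⟩ := Finset.mem_image.mp hg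
      obtain ⟨f', hf', rfl⟩ := Finset.mem_image.mp hg'
      have hneq : f ≠ f' := fun hh => hgg' (by rw [hh])
      exact (hdisj f hf f' hf' hneq).mono (hpsub f) (hpsub f')
    have hb4 : ((E''.image r).biUnion pdom).card = ∑ g ∈ E''.image r, (pdom g).card :=
      Finset.card_biUnion hdisj'
    have hkE : k * Δ'.card ≤ k * E.card := Nat.mul_le_mul_left k hcard
    have : k * Δ'.card ≤ 2 * ((E''.image r).biUnion pdom).card := by
      rw [hb4, hb3]
      calc k * Δ'.card ≤ k * E.card := hkE
        _ ≤ (E''.biUnion pdom).card := hbound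
        _ ≤ ∑ f ∈ E'', (pdom f).card := hb1
        _ ≤ 2 * ∑ f ∈ E'', (pdom (r f)).card := hb2
    have hk2 : 2 * (k / 2) ≤ k := Nat.mul_div_le k 2
    apply Nat.le_of_mul_le_mul_left _ (show 0 < 2 by norm_num)
    calc 2 * (k / 2 * Δ'.card) = (2 * (k / 2)) * Δ'.card := by ring
      _ ≤ k * Δ'.card := Nat.mul_le_mul_right _ hk2
      _ ≤ 2 * ((E''.image r).biUnion pdom).card := this


lemma key (Δ : Finset (Finset (ℕ × ℕ))) (a b : ℕ)
    (hne : ∀ f ∈ Δ, f.Nonempty) (hhne : halfPart Δ a b ≠ ∅) :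
    hn Δ ≤ 2 * hn (halfPart Δ a b) := by
  have hS : {m | ∃ k, hnProp Δ k ∧ m = k + 1}.Nonempty := ⟨1, 0, hnProp_zero Δ, rfl⟩
  apply csSup_le hS
  rintro m ⟨k, hk, rfl⟩
  have h2 : hnProp (halfPart Δ a b) (k / 2) := hnProp_half Δ a b k hne hk
  have hb := bddS (halfPart Δ a b) (Finset.nonempty_iff_ne_empty.mpr hhne)
  have hle : k / 2 + 1 ≤ hn (halfPart Δ a b) := le_csSup hb ⟨k / 2, h2, rfl⟩
  omega

theorem stmt_4 (H : ℕ → Set ℕ) (m₀ m m₁ : ℕ) (hm : m₀ < m) (hm' : m < m₁)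
    (Δ : Finset (Finset (ℕ × ℕ))) (hΔ : InKH H Δ)
    (hdom : ∀ f ∈ Δ, pdom f ⊆ Finset.Ico m₀ m₁) :
    (halfPart Δ m₀ m = ∅ ∨ hn Δ ≤ 2 * hn (halfPart Δ m₀ m)) ∧
    (halfPart Δ m m₁ = ∅ ∨ hn Δ ≤ 2 * hn (halfPart Δ m m₁)) := by
  have hne : ∀ f ∈ Δ, f.Nonempty := fun f hf => (hΔ.2 f hf).2.1
  constructor
  · by_cases h : halfPart Δ m₀ m = ∅
    · exact Or.inl h
    · exact Or.inr (key Δ m₀ m hne h)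
  · by_cases h : halfPart Δ m m₁ = ∅
    · exact Or.inl h
    · exact Or.inr (key Δ m m₁ hne h)
end

section
/- Suppose Δ ∈ K^H and hn⁺(Δ) > k with k ≥ 1. Then there exists Δ' ∈ K^H such that: every g ∈ Δ' is a restriction of some f ∈ Δ; every f ∈ Δ has some g ∈ Δ' with g ⊆ f (i.e., Δ ⪯ Δ'); the domains of the members of Δ' are pairwise disjoint, each of size exactly k; and hn(Δ') ≥ k + 1. -/
theorem stmt_6 (H : ℕ → Set ℕ) (Δ : Finset (Finset (ℕ × ℕ))) (hΔ : InKH H Δ)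
    (k : ℕ) (hk : 1 ≤ k) (hsel : k < hnPlus Δ) :
    ∃ Δ' : Finset (Finset (ℕ × ℕ)),
      (∀ g ∈ Δ', ∃ f ∈ Δ, g ⊆ f) ∧
      Prec Δ Δ' ∧
      (∀ g ∈ Δ', ∀ g' ∈ Δ', g ≠ g' → Disjoint (pdom g) (pdom g')) ∧
      (∀ g ∈ Δ', (pdom g).card = k) ∧
      k + 1 ≤ hn Δ' := by
  obtain ⟨f₀, hf₀⟩ := hΔ.1
  have hbdd : BddAbove {m | ∃ k F, IsSelector Δ k F ∧ m = k + 1} := by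
    refine ⟨(pdom f₀).card + 1, ?_⟩
    rintro m ⟨k', F, hF, rfl⟩
    have h1 := (hF.1 f₀ hf₀)
    have := Finset.card_le_card h1.1
    omega
  have hne : {m | ∃ k F, IsSelector Δ k F ∧ m = k + 1}.Nonempty := by
    by_contra h
    rw [Set.not_nonempty_iff_eq_empty] at h
    unfold hnPlus at hsel
    rw [h] at hsel
    simp at hsel
  have hmem := Nat.sSup_mem hne hbdd
  obtain ⟨k', F, hF, hEq⟩ := hmem
  have hk' : k ≤ k' := by
    have h2 : hnPlus Δ = k' + 1 := hEq ▸ rfl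
    omega
  have hsub : ∀ f, ∃ s, f ∈ Δ → s ⊆ F f ∧ s.card = k := by
    intro f
    by_cases hf : f ∈ Δ
    · obtain ⟨s, hs1, hs2⟩ := Finset.exists_subset_card_eq
        (show k ≤ (F f).card by rw [(hF.1 f hf).2]; exact hk')
      exact ⟨s, fun _ => ⟨hs1, hs2⟩⟩
    · exact ⟨∅, fun h => absurd h hf⟩
  choose F' hF' using hsub
  set res : Finset (ℕ × ℕ) → Finset (ℕ × ℕ) :=
    fun f => f.filter (fun p => p.1 ∈ F' f) with hres
  have hpdom : ∀ f ∈ Δ, pdom (res f) = F' f := by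
    intro f hf
    apply Finset.Subset.antisymm
    · intro n hn
      simp only [pdom, hres, Finset.mem_image, Finset.mem_filter] at hn
      obtain ⟨p, ⟨hp1, hp2⟩, hp3⟩ := hn
      exact hp3 ▸ hp2
    · intro n hn
      have hsub2 : F' f ⊆ pdom f := (hF' f hf).1.trans (hF.1 f hf).1
      have := hsub2 hn
      simp only [pdom, Finset.mem_image] at this ⊢
      obtain ⟨p, hp1, hp2⟩ := this
      exact ⟨p, Finset.mem_filter.mpr ⟨hp1, hp2 ▸ hn⟩, hp2⟩
  refine ⟨Δ.image res, ?_, ?_, ?_, ?_, ?_⟩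
  · rintro g hg
    obtain ⟨f, hf, rfl⟩ := Finset.mem_image.mp hg
    exact ⟨f, hf, Finset.filter_subset _ _⟩
  · intro f hf
    exact ⟨res f, Finset.mem_image_of_mem _ hf, Finset.filter_subset _ _⟩
  · rintro g hg g' hg' hne'
    obtain ⟨f, hf, rfl⟩ := Finset.mem_image.mp hg
    obtain ⟨f', hf', rfl⟩ := Finset.mem_image.mp hg'
    have hff' : f ≠ f' := fun h => hne' (by rw [h])
    rw [hpdom f hf, hpdom f' hf']
    exact (hF.2 f hf f' hf' hff').mono (hF' f hf).1 (hF' f' hf').1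
  · rintro g hg
    obtain ⟨f, hf, rfl⟩ := Finset.mem_image.mp hg
    rw [hpdom f hf]
    exact (hF' f hf).2
  · have hdisj : ∀ g ∈ Δ.image res, ∀ g' ∈ Δ.image res, g ≠ g' →
        Disjoint (pdom g) (pdom g') := by
      rintro g hg g' hg' hne'
      obtain ⟨f, hf, rfl⟩ := Finset.mem_image.mp hg
      obtain ⟨f', hf', rfl⟩ := Finset.mem_image.mp hg'
      have hff' : f ≠ f' := fun h => hne' (by rw [h])
      rw [hpdom f hf, hpdom f' hf']
      exact (hF.2 f hf f' hf' hff').mono (hF' f hf).1 (hF' f' hf').1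
    have hcard : ∀ g ∈ Δ.image res, (pdom g).card = k := by
      rintro g hg
      obtain ⟨f, hf, rfl⟩ := Finset.mem_image.mp hg
      rw [hpdom f hf]
      exact (hF' f hf).2
    have hprop : hnProp (Δ.image res) k := by
      intro Δs hΔs
      refine ⟨Δs, Finset.Subset.refl _,
        fun g hg g' hg' h => hdisj g (hΔs hg) g' (hΔs hg') h, ?_⟩
      rw [Finset.card_biUnion (fun g hg g' hg' h => hdisj g (hΔs hg) g' (hΔs hg') h)]
      rw [Finset.sum_congr rfl (fun g hg => hcard g (hΔs hg))]
      simp [mul_comm]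
    have hbdd2 : BddAbove {m | ∃ j, hnProp (Δ.image res) j ∧ m = j + 1} := by
      refine ⟨((Δ.image res).biUnion pdom).card + 1, ?_⟩
      rintro m ⟨j, hj, rfl⟩
      obtain ⟨Δ'', hΔ'', _, hle⟩ := hj (Δ.image res) (Finset.Subset.refl _)
      have h1 : 1 ≤ (Δ.image res).card :=
        Finset.card_pos.mpr ⟨res f₀, Finset.mem_image_of_mem _ hf₀⟩
      have h2 : (Δ''.biUnion pdom).card ≤ ((Δ.image res).biUnion pdom).card :=
        Finset.card_le_card (Finset.biUnion_subset_biUnion_of_subset_left _ hΔ'')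
      have h3 : j ≤ j * (Δ.image res).card := Nat.le_mul_of_pos_right _ h1
      omega
    exact le_csSup hbdd2 ⟨k, hprop, rfl⟩
end

section
/- Let ⟨f_i : i < ω⟩ be functions ℕ → ℕ with f_{i+1} <* f_i, let g : ℕ → ℕ, and let ⟨k_i : i < ω⟩ be a strictly increasing sequence such that for every i: f_0(k_i) > f_1(k_i) > … > f_i(k_i) > g(k_i). Let K = {k_i : i < ω}. Suppose ⟨n_i : i < ω⟩ is a strictly increasing sequence with n_0 = 0 such that (i) for infinitely many i, |(n_i, n_{i+1}) ∩ K| > 2^{n_i}, and (ii) for every i and every n ≥ n_{i+1}, f_{i+1}(n) < f_i(n). Define h : ℕ → ℕ by h(n) = f_i(n) for n ∈ [n_i, n_{i+1}). Then there are infinitely many k with g(k) < h(k); in particular h <* g fails. -/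
/-!
Pick a block `(n i, n (i+1))` containing more than `2 ^ n i ≥ i` points of `K`. By pigeonhole one of
them is `k ℓ` with `ℓ ≥ i`, and on that block `h = f i`. The chain condition at `k ℓ` gives
`g (k ℓ) < f ℓ (k ℓ) ≤ f i (k ℓ) = h (k ℓ)`.
-/

open Set

theorem Set.ncard_preimage_of_injective {α β : Type*} {f : α → β} (hf : f.Injective) (s : Set β) :
    (f ⁻¹' s).ncard = (s ∩ range f).ncard := by
  rw [← preimage_inter_range, ncard_preimage_of_injective_subset_range hf inter_subset_right]

theorem Set.exists_mem_le_of_lt_ncard {s : Set ℕ} {a : ℕ} (h : a < s.ncard) : ∃ x ∈ s, a ≤ x := by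
  obtain ⟨x, hxs, hxa⟩ := exists_mem_notMem_of_ncard_lt_ncard (s := Iio a) (by simpa using h)
  exact ⟨x, hxs, not_lt.1 hxa⟩

theorem le_of_forall_succ_le_of_le {β : Type*} [Preorder β] {u : ℕ → β} {i ℓ : ℕ}
    (hu : ∀ j < ℓ, u (j + 1) ≤ u j) (hiℓ : i ≤ ℓ) : u ℓ ≤ u i :=
  antitoneOn_of_add_one_le (s := Iic ℓ) ordConnected_Iic
    (fun j _ _ hj ↦ hu j (Nat.lt_of_succ_le hj)) hiℓ (mem_Iic.2 le_rfl) hiℓ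

theorem stmt_11_general (f : ℕ → ℕ → ℕ)
    (g : ℕ → ℕ) (k : ℕ → ℕ) (hk : StrictMono k)
    (hchain : ∀ i, (∀ j < i, f (j + 1) (k i) < f j (k i)) ∧ g (k i) < f i (k i))
    (n : ℕ → ℕ) (hn : StrictMono n)
    (hbig : ∀ N, ∃ i ≥ N,
      2 ^ (n i) < Set.ncard {x | n i < x ∧ x < n (i + 1) ∧ ∃ j, k j = x})
    (h : ℕ → ℕ) (hh : ∀ i m, n i ≤ m → m < n (i + 1) → h m = f i m) :
    ∀ N, ∃ m ≥ N, g m < h m := by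
  intro N
  obtain ⟨i, hiN, hcard⟩ := hbig N
  have hblock : {x | n i < x ∧ x < n (i + 1) ∧ ∃ j, k j = x} = Ioo (n i) (n (i + 1)) ∩ range k := by
    ext; simp [and_assoc]
  have hi : i < (k ⁻¹' Ioo (n i) (n (i + 1))).ncard := by
    rw [ncard_preimage_of_injective hk.injective, ← hblock]
    exact hn.le_apply.trans_lt (Nat.lt_two_pow_self.trans hcard)
  obtain ⟨ℓ, ⟨hℓlo, hℓhi⟩, hiℓ⟩ := exists_mem_le_of_lt_ncard hi
  refine ⟨k ℓ, by have : i ≤ n i := hn.le_apply; omega, ?_⟩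
  rw [hh i (k ℓ) hℓlo.le hℓhi]
  exact (hchain ℓ).2.trans_le <|
    le_of_forall_succ_le_of_le (u := (f · (k ℓ))) (fun j hj ↦ ((hchain ℓ).1 j hj).le) hiℓ

theorem stmt_11 (f : ℕ → ℕ → ℕ)
    (hf : ∀ i, ∀ᶠ n in Filter.atTop, f (i + 1) n < f i n)
    (g : ℕ → ℕ) (k : ℕ → ℕ) (hk : StrictMono k)
    (hchain : ∀ i, (∀ j < i, f (j + 1) (k i) < f j (k i)) ∧ g (k i) < f i (k i))
    (n : ℕ → ℕ) (hn : StrictMono n) (hn0 : n 0 = 0)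
    (hbig : ∀ N, ∃ i ≥ N,
      2 ^ (n i) < Set.ncard {x | n i < x ∧ x < n (i + 1) ∧ ∃ j, k j = x})
    (hdec : ∀ i, ∀ m, n (i + 1) ≤ m → f (i + 1) m < f i m)
    (h : ℕ → ℕ) (hh : ∀ i m, n i ≤ m → m < n (i + 1) → h m = f i m) :
    ∀ N, ∃ m ≥ N, g m < h m :=
  stmt_11_general f g k hk hchain n hn hbig h hh
end

section
/- Fix N ∈ ℕ with N ≥ 4 and a set S. For a nonempty finite subset E ⊆ S define nor(E) = 1 if 4·|E| ≥ N, and nor(E) = N − |E| otherwise. Define h(k) = k − 1 if k ≥ N; h(k) = 2k − N if 7N < 8k and k < N; and h(k) = 1 otherwise. Then for every k ≥ 2 and all nonempty finite E₀, E₁ ⊆ S with nor(E₀) ≥ k and nor(E₁) ≥ k, one has E₀ ∪ E₁ nonempty, |E₀ ∪ E₁| < N, and nor(E₀ ∪ E₁) ≥ h(k). -/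
theorem stmt_13 {S : Type*} [DecidableEq S] (N : ℕ) (hN : 4 ≤ N)
    (nor : Finset S → ℕ)
    (hnor : ∀ E : Finset S, nor E = if N ≤ 4 * E.card then 1 else N - E.card)
    (h : ℕ → ℕ)
    (hh : ∀ k, h k = if N ≤ k then k - 1
      else if 7 * N < 8 * k then 2 * k - N else 1) :
    ∀ k, 2 ≤ k → ∀ E₀ E₁ : Finset S, E₀.Nonempty → E₁.Nonempty →
      k ≤ nor E₀ → k ≤ nor E₁ →
      (E₀ ∪ E₁).Nonempty ∧ (E₀ ∪ E₁).card < N ∧ h k ≤ nor (E₀ ∪ E₁) := by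
  intro k hk E₀ E₁ h0 h1 hn0 hn1
  rw [hnor] at hn0 hn1
  have c0 : ¬ (N ≤ 4 * E₀.card) := by
    intro hc; rw [if_pos hc] at hn0; omega
  have c1 : ¬ (N ≤ 4 * E₁.card) := by
    intro hc; rw [if_pos hc] at hn1; omega
  rw [if_neg c0] at hn0
  rw [if_neg c1] at hn1
  push_neg at c0 c1
  have A0 : k + E₀.card ≤ N := by omega
  have A1 : k + E₁.card ≤ N := by omega
  clear hn0 hn1
  have hp0 : 0 < E₀.card := Finset.card_pos.mpr h0
  have hcu : (E₀ ∪ E₁).card ≤ E₀.card + E₁.card := Finset.card_union_le _ _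
  refine ⟨h0.mono (Finset.subset_union_left), by omega, ?_⟩
  rw [hh, hnor]
  have hkN : ¬ (N ≤ k) := by omega
  rw [if_neg hkN]
  by_cases h7 : 7 * N < 8 * k
  · rw [if_pos h7]
    have : ¬ (N ≤ 4 * (E₀ ∪ E₁).card) := by omega
    rw [if_neg this]; omega
  · rw [if_neg h7]
    split <;> omega
end

section
/- Let (ℙ, τ) be a model of topological sweetness. If p, q ∈ ℙ, p ≤ q, and U is a τ-open neighbourhood of q, then there is a τ-open neighbourhood V of p such that every r ∈ V has an upper bound r' ∈ U (i.e., ∀r ∈ V ∃r' ∈ U with r ≤ r'). -/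
/-- A model of topological sweetness (Stern): a partial order with a minimum
element, carrying a second countable topology in which the minimum is isolated,
such that whenever `pₙ → p`, `p ≤ q`, and `W` is a neighbourhood of `q`, there
is `r ∈ W` with `r ≥ q` and `pₙ ≤ r` for infinitely many `n`. -/
def TopSweet (P : Type*) [PartialOrder P] [OrderBot P] [TopologicalSpace P] : Prop :=
  SecondCountableTopology P ∧ IsOpen ({⊥} : Set P) ∧
  ∀ (pn : ℕ → P) (p q : P) (W : Set P),
    Filter.Tendsto pn Filter.atTop (nhds p) → p ≤ q → W ∈ nhds q →
    ∃ r ∈ W, q ≤ r ∧ {n | pn n ≤ r}.Infinite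

theorem stmt_17 {P : Type*} [PartialOrder P] [OrderBot P] [TopologicalSpace P]
    (hP : TopSweet P) {p q : P} (hpq : p ≤ q)
    {U : Set P} (hU : IsOpen U) (hqU : q ∈ U) :
    ∃ V : Set P, IsOpen V ∧ p ∈ V ∧ ∀ r ∈ V, ∃ r' ∈ U, r ≤ r' := by
  obtain ⟨hsc, -, hsweet⟩ := hP
  by_contra h
  push_neg at h
  have hfreq : ∃ᶠ x in nhds p, ¬ ∃ r' ∈ U, x ≤ r' := by
    rw [Filter.frequently_iff]
    intro V hV
    obtain ⟨W, hWV, hWopen, hpW⟩ := mem_nhds_iff.mp hV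
    obtain ⟨r, hrW, hr⟩ := h W hWopen hpW
    exact ⟨r, hWV hrW, by push_neg; exact hr⟩
  obtain ⟨pn, hpn, hbad⟩ := Filter.exists_seq_forall_of_frequently hfreq
  obtain ⟨r, hrU, hqr, hinf⟩ := hsweet pn p q U hpn hpq (hU.mem_nhds hqU)
  obtain ⟨n, hn⟩ := hinf.nonempty
  exact hbad n ⟨r, hrU, hn⟩
end

section
/- Let (ℙ, τ) be a model of topological sweetness. Then for every m ∈ ℕ and every p ∈ ℙ with τ-open neighbourhood U of p, there is a τ-open neighbourhood V of p such that any m+1 conditions p_0, …, p_m ∈ V have a common upper bound in U. -/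
theorem stmt_18 {P : Type*} [PartialOrder P] [OrderBot P] [TopologicalSpace P]
    (hP : TopSweet P) (m : ℕ) {p : P} {U : Set P} (hU : IsOpen U) (hpU : p ∈ U) :
    ∃ V : Set P, IsOpen V ∧ p ∈ V ∧
      ∀ g : Fin (m + 1) → P, (∀ i, g i ∈ V) → ∃ q ∈ U, ∀ i, g i ≤ q := by
  classical
  obtain ⟨hsc, -, hsw⟩ := hP
  by_contra h
  push_neg at h
  haveI := hsc
  obtain ⟨u, hu⟩ := (nhds p).exists_antitone_basis
  have hch : ∀ n : ℕ, ∃ g : Fin (m+1) → P, (∀ i, g i ∈ u n) ∧ ∀ q ∈ U, ∃ i, ¬ g i ≤ q := by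
    intro n
    have hmem : u n ∈ nhds p := hu.1.mem_of_mem trivial
    obtain ⟨t, hts, hto, hpt⟩ := mem_nhds_iff.mp hmem
    obtain ⟨g, hg1, hg2⟩ := h t hto hpt
    exact ⟨g, fun i => hts (hg1 i), hg2⟩
  choose g hg1 hg2 using hch
  have htend : ∀ i : Fin (m+1), Filter.Tendsto (fun n => g n i) Filter.atTop (nhds p) :=
    fun i => hu.tendsto (fun n => hg1 n i)
  have key : ∀ k : ℕ, ∃ r ∈ U, p ≤ r ∧
      {n | ∀ i : Fin (m+1), (i : ℕ) ≤ k → g n i ≤ r}.Infinite := by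
    intro k
    induction k with
    | zero =>
      obtain ⟨r, hrU, hpr, hinf⟩ :=
        hsw (fun n => g n 0) p p U (htend 0) le_rfl (hU.mem_nhds hpU)
      refine ⟨r, hrU, hpr, hinf.mono ?_⟩
      intro n hn i hi
      have hi0 : i = 0 := Fin.ext (by simpa using hi)
      subst hi0
      exact hn
    | succ k ih =>
      obtain ⟨r, hrU, hpr, hinf⟩ := ih
      by_cases hk : k + 1 ≤ m
      · haveI : Infinite {n | ∀ i : Fin (m+1), (i : ℕ) ≤ k → g n i ≤ r} :=
          Set.infinite_coe_iff.mpr hinf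
        set S := {n | ∀ i : Fin (m+1), (i : ℕ) ≤ k → g n i ≤ r} with hS
        let e := Nat.orderEmbeddingOfSet S
        set i0 : Fin (m+1) := ⟨k+1, by omega⟩ with hi0
        have htend' : Filter.Tendsto (fun j => g (e j) i0) Filter.atTop (nhds p) :=
          (htend i0).comp (e.strictMono.tendsto_atTop)
        obtain ⟨r', hr'U, hrr', hinf'⟩ := hsw _ p r U htend' hpr (hU.mem_nhds hrU)
        refine ⟨r', hr'U, le_trans hpr hrr', ?_⟩
        have himg : ((fun j => e j) '' {j | g (e j) i0 ≤ r'}) ⊆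
            {n | ∀ i : Fin (m+1), (i : ℕ) ≤ k+1 → g n i ≤ r'} := by
          rintro n ⟨j, hj, rfl⟩ i hi
          rcases Nat.lt_or_ge (i : ℕ) (k+1) with h1 | h1
          · have heS : (e j : ℕ) ∈ S := by
              have := Nat.orderEmbeddingOfSet_range S
              exact this ▸ Set.mem_range_self j
            exact le_trans (heS i (by omega)) hrr'
          · have : i = i0 := Fin.ext (by simp [hi0]; omega)
            subst this
            exact hj
        exact (hinf'.image (fun a _ b _ hab => e.injective hab)).mono himg
      · refine ⟨r, hrU, hpr, hinf.mono ?_⟩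
        intro n hn i hi
        exact hn i (by have := i.isLt; omega)
  obtain ⟨r, hrU, hpr, hinf⟩ := key m
  obtain ⟨n, hn⟩ := hinf.nonempty
  obtain ⟨i, hi⟩ := hg2 n r hrU
  exact hi (hn i (Nat.lt_succ_iff.mp i.isLt))
end

section
/- Assume (ℙ, ℙ, ⟨E_n : n < ω⟩) is a model of sweetness on ℙ (with dense set D = ℙ), and assume any two compatible elements of ℙ have a least upper bound. For finite sequences p̄ = ⟨p_ℓ : ℓ ≤ k⟩ ⊆ ℙ and n̄ = ⟨n_ℓ : ℓ ≤ k⟩ ⊆ ℕ let U(p̄, n̄) = {q ∈ ℙ : for every ℓ ≤ k there is q' with q' E_{n_ℓ} p_ℓ and q ≤ q'}, and let B be the collection of all such sets U(p̄, n̄). Then (ℙ, B) is a model of iterable sweetness; in particular: (1) B is closed under finite intersections; (2) each U ∈ B is directed and downward closed; (3) whenever ⟨p_n : n ≤ ω⟩ ⊆ U ∈ B and ⟨p_n : n < ω⟩ converges to p_ω in the topology generated by B, there is p ∈ U with p_n ≤ p for all n ≤ ω. -/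
/-- A model of sweetness (Shelah) on `P` with dense set `D = P`:
a sequence of equivalence relations `E n` on `P`, each with countably many
classes, each class directed, `E (n+1) ⊆ E n`, with the fusion property (iv)
and the transfer property (v). -/
structure SweetModel (P : Type*) [PartialOrder P] (E : ℕ → P → P → Prop) : Prop where
  equiv : ∀ n, Equivalence (E n)
  countable : ∀ n, ∃ φ : P → ℕ, ∀ p q, E n p q ↔ φ p = φ q
  classDirected : ∀ n p q r, E n q p → E n r p → ∃ s, E n s p ∧ q ≤ s ∧ r ≤ s
  antitone : ∀ n p q, E (n + 1) p q → E n p q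
  fusion : ∀ (p : ℕ → P) (pw : P), (∀ i, E i (p i) pw) →
    ∀ n, ∃ q, pw ≤ q ∧ E n q pw ∧ ∀ i, n ≤ i → p i ≤ q
  transfer : ∀ p q : P, p ≤ q → ∀ n, ∃ k, ∀ p', E k p' p → ∃ q', E n q' q ∧ p' ≤ q'

private lemma sweet_mono_aux {P : Type*} [PartialOrder P] {E : ℕ → P → P → Prop}
    (hE : SweetModel P E) (n : ℕ) :
    ∀ (d : ℕ) (p q : P), E (n + d) p q → E n p q := by
  intro d
  induction d with
  | zero => exact fun p q h => h
  | succ d ih => exact fun p q h => ih p q (hE.antitone _ _ _ h)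

private lemma sweet_mono {P : Type*} [PartialOrder P] {E : ℕ → P → P → Prop}
    (hE : SweetModel P E) {n m : ℕ} (h : n ≤ m) {p q : P} (hpq : E m p q) :
    E n p q := by
  obtain ⟨d, rfl⟩ := Nat.exists_eq_add_of_le h
  exact sweet_mono_aux hE n d p q hpq

private lemma sweet_finBound {P : Type*} [PartialOrder P] {E : ℕ → P → P → Prop}
    (hE : SweetModel P E) (i : ℕ) (pw : P) :
    ∀ (m : ℕ) (f : Fin m → P), (∀ j, E i (f j) pw) →
      ∃ s, E i s pw ∧ pw ≤ s ∧ ∀ j, f j ≤ s := by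
  intro m
  induction m with
  | zero => exact fun f _ => ⟨pw, (hE.equiv i).refl pw, le_refl pw, fun j => j.elim0⟩
  | succ m ih =>
    intro f hf
    obtain ⟨s, hs, hpws, hfs⟩ := ih (fun j => f j.castSucc) (fun j => hf _)
    obtain ⟨s', hs', hss', hls'⟩ := hE.classDirected i pw s (f (Fin.last m)) hs (hf _)
    refine ⟨s', hs', le_trans hpws hss', fun j => ?_⟩
    rcases Fin.eq_castSucc_or_eq_last j with ⟨j', rfl⟩ | rfl
    · exact le_trans (hfs j') hss'
    · exact hls'

private lemma sweet_dir {P : Type*} [PartialOrder P] {E : ℕ → P → P → Prop}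
    (hE : SweetModel P E)
    (hlub : ∀ p q : P, (∃ r, p ≤ r ∧ q ≤ r) →
      ∃ s, p ≤ s ∧ q ≤ s ∧ ∀ r, p ≤ r → q ≤ r → s ≤ r)
    (k : ℕ) (pb : Fin (k + 1) → P) (nb : Fin (k + 1) → ℕ) :
    DirectedOn (· ≤ ·) {q | ∀ l : Fin (k + 1), ∃ q', E (nb l) q' (pb l) ∧ q ≤ q'} := by
  intro x hx y hy
  choose a ha1 ha2 using hx
  choose b hb1 hb2 using hy
  have hs : ∀ l, ∃ s, E (nb l) s (pb l) ∧ a l ≤ s ∧ b l ≤ s :=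
    fun l => hE.classDirected (nb l) (pb l) (a l) (b l) (ha1 l) (hb1 l)
  choose s hs1 hs2 hs3 using hs
  obtain ⟨r, hr1, hr2, hr3⟩ := hlub x y
    ⟨s 0, le_trans (ha2 0) (hs2 0), le_trans (hb2 0) (hs3 0)⟩
  refine ⟨r, fun l => ⟨s l, hs1 l, ?_⟩, hr1, hr2⟩
  exact hr3 (s l) (le_trans (ha2 l) (hs2 l)) (le_trans (hb2 l) (hs3 l))

theorem stmt_19 {P : Type*} [PartialOrder P] (E : ℕ → P → P → Prop)
    (hE : SweetModel P E)
    (hlub : ∀ p q : P, (∃ r, p ≤ r ∧ q ≤ r) →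
      ∃ s, p ≤ s ∧ q ≤ s ∧ ∀ r, p ≤ r → q ≤ r → s ≤ r)
    (B : Set (Set P))
    (hB : B = {U | ∃ (k : ℕ) (pb : Fin (k + 1) → P) (nb : Fin (k + 1) → ℕ),
      U = {q | ∀ l : Fin (k + 1), ∃ q', E (nb l) q' (pb l) ∧ q ≤ q'}}) :
    B.Countable ∧
    (∀ U ∈ B, ∀ V ∈ B, U ∩ V ∈ B) ∧
    (∀ U ∈ B, DirectedOn (· ≤ ·) U ∧ ∀ p q : P, p ≤ q → q ∈ U → p ∈ U) ∧
    (∀ U ∈ B, ∀ (p : ℕ → P) (pw : P), (∀ n, p n ∈ U) → pw ∈ U →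
      Filter.Tendsto p Filter.atTop (@nhds P (TopologicalSpace.generateFrom B) pw) →
      ∃ q ∈ U, pw ≤ q ∧ ∀ n, p n ≤ q) := by
  classical
  refine ⟨?_, ?_, ?_, ?_⟩
  · -- countability
    rcases isEmpty_or_nonempty P with hP | hP
    · have hsub : B.Subsingleton := by
        intro U _ V _
        ext x
        exact hP.elim x
      exact hsub.countable
    · choose φ hφ using hE.countable
      set rep : ℕ → ℕ → P := fun n m =>
        if h : ∃ p, φ n p = m then h.choose else Classical.arbitrary P with hrep
      set F : ((k : ℕ) × ((Fin (k + 1) → ℕ) × (Fin (k + 1) → ℕ))) → Set P :=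
        fun x => {q | ∀ l : Fin (x.1 + 1),
          ∃ q', E (x.2.2 l) q' (rep (x.2.2 l) (x.2.1 l)) ∧ q ≤ q'} with hF
      have hsub : B ⊆ Set.range F := by
        rintro U hU
        rw [hB] at hU
        obtain ⟨k, pb, nb, rfl⟩ := hU
        refine ⟨⟨k, fun l => φ (nb l) (pb l), nb⟩, ?_⟩
        have key : ∀ l : Fin (k + 1),
            E (nb l) (rep (nb l) (φ (nb l) (pb l))) (pb l) := by
          intro l
          have hex : ∃ p, φ (nb l) p = φ (nb l) (pb l) := ⟨pb l, rfl⟩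
          have : φ (nb l) (rep (nb l) (φ (nb l) (pb l))) = φ (nb l) (pb l) := by
            rw [hrep]
            simp only [dif_pos hex]
            exact hex.choose_spec
          exact (hφ (nb l) _ _).2 this
        ext q
        simp only [hF, Set.mem_setOf_eq]
        refine forall_congr' fun l => exists_congr fun q' =>
          and_congr_left fun _ => ?_
        constructor
        · intro h
          exact (hE.equiv (nb l)).trans h (key l)
        · intro h
          exact (hE.equiv (nb l)).trans h ((hE.equiv (nb l)).symm (key l))
      exact (Set.countable_range F).mono hsub
  · -- intersections
    subst hB
    rintro U ⟨k1, pb1, nb1, rfl⟩ V ⟨k2, pb2, nb2, rfl⟩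
    refine ⟨k1 + 1 + k2,
      (Fin.append pb1 pb2 : Fin (k1 + 1 + (k2 + 1)) → P),
      (Fin.append nb1 nb2 : Fin (k1 + 1 + (k2 + 1)) → ℕ), ?_⟩
    ext q
    simp only [Set.mem_inter_iff, Set.mem_setOf_eq]
    constructor
    · rintro ⟨h1, h2⟩ l
      refine Fin.addCases (motive := fun l : Fin ((k1 + 1) + (k2 + 1)) =>
        ∃ q', E (Fin.append nb1 nb2 l) q' (Fin.append pb1 pb2 l) ∧ q ≤ q')
        (fun i => ?_) (fun j => ?_) l
      · simpa only [Fin.append_left] using h1 i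
      · simpa only [Fin.append_right] using h2 j
    · intro h
      constructor
      · intro l
        have := h (Fin.castAdd (k2 + 1) l)
        simpa only [Fin.append_left] using this
      · intro l
        have := h (Fin.natAdd (k1 + 1) l)
        simpa only [Fin.append_right] using this
  · -- directed and downward closed
    subst hB
    rintro U ⟨k, pb, nb, rfl⟩
    refine ⟨sweet_dir hE hlub k pb nb, fun p q hpq hq l => ?_⟩
    obtain ⟨q', h1, h2⟩ := hq l
    exact ⟨q', h1, le_trans hpq h2⟩
  · -- the fusion/convergence condition
    subst hB
    rintro U ⟨k, pb, nb, rfl⟩ p pw hp hpw htend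
    simp only [Set.mem_setOf_eq] at hpw
    choose s hs1 hs2 using hpw
    choose kk hkk using fun l => hE.transfer pw (s l) (hs2 l) (nb l)
    set nstar := Finset.univ.sup kk with hnstar
    -- convergence gives thresholds
    have hVopen : ∀ i : ℕ, ∃ N : ℕ, ∀ n ≥ N, ∃ t, E i t pw ∧ p n ≤ t := by
      intro i
      letI τ : TopologicalSpace P := TopologicalSpace.generateFrom
        {U | ∃ (k : ℕ) (pb : Fin (k + 1) → P) (nb : Fin (k + 1) → ℕ),
          U = {q | ∀ l : Fin (k + 1), ∃ q', E (nb l) q' (pb l) ∧ q ≤ q'}}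
      set V : Set P :=
        {x | ∀ _l : Fin (0 + 1), ∃ q', E i q' pw ∧ x ≤ q'} with hV
      have hVB : V ∈ {U | ∃ (k : ℕ) (pb : Fin (k + 1) → P) (nb : Fin (k + 1) → ℕ),
          U = {q | ∀ l : Fin (k + 1), ∃ q', E (nb l) q' (pb l) ∧ q ≤ q'}} :=
        ⟨0, fun _ => pw, fun _ => i, rfl⟩
      have hopen : IsOpen V := TopologicalSpace.isOpen_generateFrom_of_mem hVB
      have hmem : V ∈ nhds pw :=
        hopen.mem_nhds (fun _l => ⟨pw, (hE.equiv i).refl pw, le_refl pw⟩)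
      have hev : p ⁻¹' V ∈ Filter.atTop := htend hmem
      rw [Filter.mem_atTop_sets] at hev
      obtain ⟨N, hN⟩ := hev
      exact ⟨N, fun n hn => (hN n hn) (0 : Fin (0 + 1))⟩
    choose N hN using hVopen
    -- the approximating elements
    have hg : ∀ i n, ∃ t, E i t pw ∧ (N i ≤ n → p n ≤ t) := by
      intro i n
      by_cases h : N i ≤ n
      · obtain ⟨t, ht1, ht2⟩ := hN i n h
        exact ⟨t, ht1, fun _ => ht2⟩
      · exact ⟨pw, (hE.equiv i).refl pw, fun h' => absurd h' h⟩
    choose g hg1 hg2 using hg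
    have hr : ∀ i, ∃ r, E i r pw ∧ pw ≤ r ∧ ∀ n ≤ max (N (i + 1)) i, g i n ≤ r := by
      intro i
      obtain ⟨s', h1, h2, h3⟩ := sweet_finBound hE i pw (max (N (i + 1)) i + 1)
        (fun j => g i (j : ℕ)) (fun j => hg1 i (j : ℕ))
      exact ⟨s', h1, h2, fun n hn => h3 ⟨n, Nat.lt_succ_of_le hn⟩⟩
    choose r hr1 hr2 hr3 using hr
    obtain ⟨q, hq1, hq2, hq3⟩ := hE.fusion r pw hr1 nstar
    -- q belongs to U
    have hqU : ∀ l : Fin (k + 1), ∃ q', E (nb l) q' (pb l) ∧ q ≤ q' := by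
      intro l
      have h1 : E (kk l) q pw :=
        sweet_mono hE (Finset.le_sup (Finset.mem_univ l)) hq2
      obtain ⟨q', hq'1, hq'2⟩ := hkk l q h1
      exact ⟨q', (hE.equiv (nb l)).trans hq'1 (hs1 l), hq'2⟩
    -- q bounds the tail of the sequence
    have hqp : ∀ n, N nstar ≤ n → p n ≤ q := by
      intro n hn
      set Pp : ℕ → Prop := fun j => N j ≤ n with hPp
      set i := Nat.findGreatest Pp (max n nstar) with hi
      have hile : nstar ≤ i :=
        Nat.le_findGreatest (P := Pp) (le_max_right n nstar) (show Pp nstar from hn)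
      have hiN : Pp i :=
        Nat.findGreatest_spec (P := Pp) (le_max_right n nstar) (show Pp nstar from hn)
      have hcov : n ≤ max (N (i + 1)) i := by
        rcases eq_or_lt_of_le (Nat.findGreatest_le (P := Pp) (max n nstar) :
            i ≤ max n nstar) with he | hl
        · exact le_max_of_le_right (le_trans (le_max_left n nstar) he.ge)
        · have hni : ¬ Pp (i + 1) :=
            Nat.findGreatest_is_greatest (P := Pp) (n := max n nstar)
              (lt_of_le_of_lt (le_of_eq hi.symm) (Nat.lt_succ_self i)) hl
          exact le_max_of_le_left (le_of_lt (lt_of_not_ge hni))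
      calc p n ≤ g i n := hg2 i n hiN
        _ ≤ r i := hr3 i n hcov
        _ ≤ q := hq3 i hile
    -- absorb the finitely many initial terms using directedness
    have hdirU := sweet_dir hE hlub k pb nb
    have hstep : ∀ m : ℕ, ∃ Q, (∀ l : Fin (k + 1),
        ∃ q', E (nb l) q' (pb l) ∧ Q ≤ q') ∧ q ≤ Q ∧ ∀ j < m, p j ≤ Q := by
      intro m
      induction m with
      | zero => exact ⟨q, hqU, le_refl q, fun j hj => absurd hj (Nat.not_lt_zero j)⟩
      | succ m ih =>
        obtain ⟨Q, hQ1, hQ2, hQ3⟩ := ih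
        obtain ⟨Q', hQ'U, hQQ', hpQ'⟩ := hdirU Q hQ1 (p m) (hp m)
        refine ⟨Q', hQ'U, le_trans hQ2 hQQ', fun j hj => ?_⟩
        rcases Nat.lt_succ_iff_lt_or_eq.mp hj with h | rfl
        · exact le_trans (hQ3 j h) hQQ'
        · exact hpQ'
    obtain ⟨Q, hQU, hqQ, hQearly⟩ := hstep (N nstar)
    refine ⟨Q, hQU, le_trans hq1 hqQ, fun n => ?_⟩
    by_cases h : n < N nstar
    · exact hQearly n h
    · exact le_trans (hqp n (le_of_not_gt h)) hqQ
end
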